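/- Let d ≥ 1 and let f : [0,1]^d → ℝ be differentiable with ∇f continuous on [0,1]^d. Let x ∈ [0,1]^d and let (Ω_n)_n be a sequence of axis-aligned hypercubes contained in [0,1]^d with x ∈ Ω_n for every n, whose diameters tend to 0; write w_n for the Lebesgue measure of Ω_n and σ_n² for the variance of f on Ω_n. Then lim_{n→∞} σ_n² / w_n^{2/d} = ‖∇f(x)‖₂² / 12. -/

import Mathlib

open MeasureTheory Filter Set
open scoped ENNReal RealInnerProductSpace

noncomputable def unitCube (d : ℕ) : Set (EuclideanSpace ℝ (Fin d)) :=
  {x | ∀ i, x i ∈ Set.Icc (0:ℝ) 1}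

/-- Mean of `f` on `Ω` (w.r.t. normalized Lebesgue measure on `Ω`). -/
noncomputable def meanOn {d : ℕ} (f : EuclideanSpace ℝ (Fin d) → ℝ)
    (Ω : Set (EuclideanSpace ℝ (Fin d))) : ℝ :=
  (volume Ω).toReal⁻¹ * ∫ x in Ω, f x

/-- Variance of `f` on `Ω`. -/
noncomputable def varOn {d : ℕ} (f : EuclideanSpace ℝ (Fin d) → ℝ)
    (Ω : Set (EuclideanSpace ℝ (Fin d))) : ℝ :=
  (volume Ω).toReal⁻¹ * ∫ x in Ω, (f x - meanOn f Ω)^2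

/-- Standard deviation of `f` on `Ω`. -/
noncomputable def stddevOn {d : ℕ} (f : EuclideanSpace ℝ (Fin d) → ℝ)
    (Ω : Set (EuclideanSpace ℝ (Fin d))) : ℝ :=
  Real.sqrt (varOn f Ω)

/-- `Ω` is an axis-aligned hypercube (product of `d` intervals of equal positive length). -/
def IsCube {d : ℕ} (Ω : Set (EuclideanSpace ℝ (Fin d))) : Prop :=
  ∃ (a : Fin d → ℝ) (l : ℝ), 0 < l ∧
    Ω = {x : EuclideanSpace ℝ (Fin d) | ∀ i, x i ∈ Set.Icc (a i) (a i + l)}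

/-- The axis-aligned hypercube of Lebesgue measure `w` centered at `a`. -/
noncomputable def centeredCube (d : ℕ) (a : EuclideanSpace ℝ (Fin d)) (w : ℝ) :
    Set (EuclideanSpace ℝ (Fin d)) :=
  {x | ∀ i, x i ∈ Set.Icc (a i - w ^ (1/(d:ℝ)) / 2) (a i + w ^ (1/(d:ℝ)) / 2)}

/-- `Ωs` is a partition (up to null sets) of the unit cube `[0,1]^d`. -/
def IsAEPartition {d : ℕ} {ι : Type*} (Ωs : ι → Set (EuclideanSpace ℝ (Fin d))) : Prop :=
  (∀ k, MeasurableSet (Ωs k)) ∧ (∀ k, Ωs k ⊆ unitCube d) ∧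
  (∀ k j, k ≠ j → volume (Ωs k ∩ Ωs j) = 0) ∧
  volume (unitCube d \ ⋃ k, Ωs k) = 0


/-!
Under the normalized Lebesgue measure on a cube of side `l`, the coordinates are independent and
uniform on intervals of length `l`, each of variance `l ^ 2 / 12`; hence the affine approximation
`y ↦ f x + ⟪∇f x, y - x⟫` has variance `‖∇f x‖ ^ 2 * l ^ 2 / 12`. The standard deviation is an
`L²` seminorm, so it moves by at most `sup |f - g|` when `f` is replaced by `g`, and by the mean
value inequality and continuity of `∇f` at `x` this supremum is `o(l)` on cubes shrinking to `x`.
Thus `σ / l → ‖∇f x‖ / √12`, and `w ^ (2 / d) = l ^ 2`.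
-/

open ProbabilityTheory

lemma MeasureTheory.MeasurePreserving.cond {α β : Type*} [MeasurableSpace α] [MeasurableSpace β]
    {μ : Measure α} {ν : Measure β} {f : α → β} (hf : MeasurePreserving f μ ν) {s : Set β}
    (hs : MeasurableSet s) : MeasurePreserving f μ[|f ⁻¹' s] ν[|s] := by
  refine ⟨hf.measurable, ?_⟩
  rw [ProbabilityTheory.cond, ProbabilityTheory.cond, Measure.map_smul,
    (hf.restrict_preimage hs).map_eq, hf.measure_preimage hs.nullMeasurableSet]

lemma ContinuousOn.memLp_cond {α E : Type*} [TopologicalSpace α] [MeasurableSpace α]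
    [OpensMeasurableSpace α] [NormedAddCommGroup E] [SecondCountableTopologyEither α E]
    {μ : Measure α} {s : Set α} (hs : IsCompact s) (hsm : MeasurableSet s) {f : α → E}
    (hf : ContinuousOn f s) (p : ℝ≥0∞) : MemLp f p μ[|s] := by
  obtain ⟨C, hC⟩ := hs.exists_bound_of_continuousOn hf
  exact .of_bound ((hf.aestronglyMeasurable hsm).smul_measure _) C ((ae_cond_mem hsm).mono hC)

namespace ProbabilityTheory

section StandardDeviation

variable {Ω : Type*} {mΩ : MeasurableSpace Ω} {μ : Measure Ω} {X Y : Ω → ℝ}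

lemma evariance_eq_eLpNorm_sq (X : Ω → ℝ) (μ : Measure Ω) :
    eVar[X; μ] = eLpNorm (X - fun _ ↦ μ[X]) 2 μ ^ 2 := by
  rw [eLpNorm_eq_lintegral_rpow_enorm_toReal two_ne_zero ENNReal.ofNat_ne_top,
    ← ENNReal.rpow_natCast, ← ENNReal.rpow_mul]
  simp [evariance]

lemma sqrt_variance_eq_norm_toLp [IsFiniteMeasure μ] (hX : MemLp X 2 μ) :
    √Var[X; μ] = ‖(hX.sub (memLp_const μ[X])).toLp _‖ := by
  rw [Lp.norm_toLp, variance, evariance_eq_eLpNorm_sq, ENNReal.toReal_pow,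
    Real.sqrt_sq ENNReal.toReal_nonneg]

lemma abs_sqrt_variance_sub_le_sqrt_variance_sub [IsFiniteMeasure μ] (hX : MemLp X 2 μ)
    (hY : MemLp Y 2 μ) : |√Var[X; μ] - √Var[Y; μ]| ≤ √Var[X - Y; μ] := by
  rw [sqrt_variance_eq_norm_toLp hX, sqrt_variance_eq_norm_toLp hY,
    sqrt_variance_eq_norm_toLp (hX.sub hY)]
  refine (abs_norm_sub_norm_le _ _).trans_eq (congrArg _ ?_)
  rw [← MemLp.toLp_sub]
  refine MemLp.toLp_congr _ _ (.of_forall fun ω ↦ ?_)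
  simp [integral_sub (hX.integrable one_le_two) (hY.integrable one_le_two)]
  ring

lemma abs_sqrt_variance_sub_le [IsProbabilityMeasure μ] (hX : MemLp X 2 μ) (hY : MemLp Y 2 μ)
    {e : ℝ} (h : ∀ᵐ ω ∂μ, |X ω - Y ω| ≤ e) : |√Var[X; μ] - √Var[Y; μ]| ≤ e := by
  obtain ⟨ω, hω⟩ := h.exists
  have hvar : Var[X - Y; μ] ≤ e ^ 2 := by
    simpa [Pi.sub_def] using variance_le_sq_of_bounded (h.mono fun ω hω ↦ abs_le.1 hω)
      (hX.sub hY).aestronglyMeasurable.aemeasurable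
  calc |√Var[X; μ] - √Var[Y; μ]| ≤ √Var[X - Y; μ] :=
        abs_sqrt_variance_sub_le_sqrt_variance_sub hX hY
    _ ≤ e := Real.sqrt_le_iff.2 ⟨(abs_nonneg _).trans hω, hvar⟩

end StandardDeviation

lemma cond_univ_pi {ι : Type*} [Fintype ι] {α : ι → Type*} [∀ i, MeasurableSpace (α i)]
    (μ : ∀ i, Measure (α i)) [∀ i, SigmaFinite (μ i)] {s : ∀ i, Set (α i)}
    (hs : ∀ i, MeasurableSet (s i)) (hfin : ∀ i, μ i (s i) ≠ ∞) :
    (Measure.pi μ)[|univ.pi s] = Measure.pi fun i ↦ (μ i)[|s i] := by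
  refine (Measure.pi_eq fun t ht ↦ ?_).symm
  rw [cond_apply (.univ_pi hs), ← Set.pi_inter_distrib, Measure.pi_pi, Measure.pi_pi,
    ENNReal.prod_inv_distrib fun i _ j _ _ ↦ .inr (hfin j), ← Finset.prod_mul_distrib]
  exact Finset.prod_congr rfl fun i _ ↦ (cond_apply (hs i) _ _).symm

lemma isProbabilityMeasure_cond_Icc {a b : ℝ} (hab : a < b) :
    IsProbabilityMeasure volume[|Icc a b] :=
  cond_isProbabilityMeasure_of_finite (by simp [hab]) (by simp)

lemma variance_id_cond_Icc {a b : ℝ} (hab : a < b) :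
    Var[id; volume[|Icc a b]] = (b - a) ^ 2 / 12 := by
  have := isProbabilityMeasure_cond_Icc hab
  have hint (h : ℝ → ℝ) : ∫ t, h t ∂volume[|Icc a b] = (b - a)⁻¹ * ∫ t in a..b, h t := by
    rw [ProbabilityTheory.cond, integral_smul_measure, integral_Icc_eq_integral_Ioc,
      ← intervalIntegral.integral_of_le hab.le]
    simp [hab.le]
  rw [variance_eq_sub (continuousOn_id.memLp_cond isCompact_Icc measurableSet_Icc 2)]
  simp only [id, Pi.pow_apply]
  rw [hint, hint, integral_pow, integral_id]
  field_simp [(sub_pos.2 hab).ne']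
  ring

end ProbabilityTheory

open InnerProductSpace in
lemma abs_sub_sub_inner_le_of_norm_gradient_sub_le {E : Type*} [NormedAddCommGroup E]
    [InnerProductSpace ℝ E] [CompleteSpace E] {f : E → ℝ} {s : Set E} (hs : Convex ℝ s)
    (hf : ∀ u ∈ s, DifferentiableAt ℝ f u) {G : E} {ε : ℝ}
    (hG : ∀ u ∈ s, ‖gradient f u - G‖ ≤ ε) {x y : E} (hx : x ∈ s) (hy : y ∈ s) :
    |f y - f x - ⟪G, y - x⟫| ≤ ε * ‖y - x‖ := by
  have hderiv : ∀ u ∈ s, ‖fderiv ℝ f u - toDual ℝ E G‖ ≤ ε := fun u hu ↦ by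
    rw [← (toDual ℝ E).symm.norm_map, map_sub, LinearIsometryEquiv.symm_apply_apply]
    exact hG u hu
  simpa using hs.norm_image_sub_le_of_norm_hasFDerivWithin_le'
    (fun u hu ↦ (hf u hu).hasFDerivAt.hasFDerivWithinAt) hderiv hx hy

lemma tendsto_smallSets_nhdsWithin_of_diam {α ι : Type*} [PseudoMetricSpace α] {l : Filter ι}
    {s : Set α} {x : α} {Ω : ι → Set α} (hb : ∀ n, Bornology.IsBounded (Ω n))
    (hsub : ∀ n, Ω n ⊆ s) (hmem : ∀ n, x ∈ Ω n)
    (hdiam : Tendsto (fun n ↦ Metric.diam (Ω n)) l (nhds 0)) :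
    Tendsto Ω l (nhdsWithin x s).smallSets := by
  refine tendsto_smallSets_iff.2 fun t ht ↦ ?_
  obtain ⟨ε, hε, hεt⟩ := Metric.mem_nhdsWithin_iff.1 ht
  filter_upwards [hdiam.eventually (gt_mem_nhds hε)] with n hn u hu
  exact hεt ⟨(Metric.dist_le_diam_of_mem (hb n) hu (hmem n)).trans_lt hn, hsub n hu⟩

section Cube

variable {d : ℕ}

def cube (a : Fin d → ℝ) (l : ℝ) : Set (EuclideanSpace ℝ (Fin d)) :=
  {x | ∀ i, x i ∈ Icc (a i) (a i + l)}

variable (a : Fin d → ℝ) (l : ℝ)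

lemma cube_eq_preimage_ofLp :
    cube a l = WithLp.ofLp ⁻¹' univ.pi fun i ↦ Icc (a i) (a i + l) := by
  ext x
  simp only [cube, mem_ofPred_eq, mem_preimage, mem_univ_pi]

lemma measurableSet_cube : MeasurableSet (cube a l) := by
  rw [cube_eq_preimage_ofLp]
  exact (MeasurableSet.univ_pi fun _ ↦ measurableSet_Icc).preimage
    (PiLp.volume_preserving_ofLp _).measurable

lemma isCompact_cube : IsCompact (cube a l) := by
  rw [cube_eq_preimage_ofLp]
  exact (PiLp.homeomorph 2 _).isCompact_preimage.2 (isCompact_univ_pi fun _ ↦ isCompact_Icc)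

lemma convex_cube : Convex ℝ (cube a l) := by
  rw [cube_eq_preimage_ofLp]
  exact (convex_pi fun _ _ ↦ convex_Icc _ _).linear_preimage
    (WithLp.linearEquiv 2 ℝ _).toLinearMap

lemma volume_cube {l : ℝ} (hl : 0 ≤ l) : (volume (cube a l)).toReal = l ^ d := by
  rw [cube_eq_preimage_ofLp, (PiLp.volume_preserving_ofLp _).measure_preimage
    (MeasurableSet.univ_pi fun _ ↦ measurableSet_Icc).nullMeasurableSet, volume_pi_pi]
  simp [Real.volume_Icc, hl]

lemma measurePreserving_ofLp_cond_cube :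
    MeasurePreserving WithLp.ofLp volume[|cube a l]
      (Measure.pi fun i ↦ volume[|Icc (a i) (a i + l)]) := by
  rw [← cond_univ_pi _ (fun _ ↦ measurableSet_Icc) (fun _ ↦ by simp), cube_eq_preimage_ofLp]
  exact (PiLp.volume_preserving_ofLp _).cond (.univ_pi fun _ ↦ measurableSet_Icc)

variable {a l}

lemma norm_sub_le_of_mem_cube (hl : 0 ≤ l) {y z : EuclideanSpace ℝ (Fin d)}
    (hy : y ∈ cube a l) (hz : z ∈ cube a l) : ‖y - z‖ ≤ √d * l := by
  have hcoord : ∀ i, ‖(y - z) i‖ ^ 2 ≤ l ^ 2 := fun i ↦ by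
    rw [Real.norm_eq_abs, sq_abs, PiLp.sub_apply]
    nlinarith [(hy i).1, (hy i).2, (hz i).1, (hz i).2]
  calc ‖y - z‖ ≤ √(∑ _i : Fin d, l ^ 2) := by
        rw [EuclideanSpace.norm_eq]
        exact Real.sqrt_le_sqrt (Finset.sum_le_sum fun i _ ↦ hcoord i)
    _ = √d * l := by simp [Real.sqrt_mul (Nat.cast_nonneg d), Real.sqrt_sq hl]

end Cube

section VarOn

variable {d : ℕ}

lemma varOn_nonneg (f : EuclideanSpace ℝ (Fin d) → ℝ) (Ω : Set (EuclideanSpace ℝ (Fin d))) :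
    0 ≤ varOn f Ω :=
  mul_nonneg (inv_nonneg.2 ENNReal.toReal_nonneg) (integral_nonneg fun _ ↦ sq_nonneg _)

lemma meanOn_eq_integral_cond (f : EuclideanSpace ℝ (Fin d) → ℝ)
    (Ω : Set (EuclideanSpace ℝ (Fin d))) : meanOn f Ω = ∫ x, f x ∂volume[|Ω] := by
  rw [meanOn, ProbabilityTheory.cond, integral_smul_measure, ENNReal.toReal_inv, smul_eq_mul]

lemma varOn_eq_variance {f : EuclideanSpace ℝ (Fin d) → ℝ} {Ω : Set (EuclideanSpace ℝ (Fin d))}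
    (hf : AEMeasurable f volume[|Ω]) : varOn f Ω = Var[f; volume[|Ω]] := by
  rw [varOn, variance_eq_integral hf, ← meanOn_eq_integral_cond f, ProbabilityTheory.cond,
    integral_smul_measure, ENNReal.toReal_inv, smul_eq_mul]

lemma abs_sqrt_varOn_sub_le {Ω : Set (EuclideanSpace ℝ (Fin d))} (hΩc : IsCompact Ω)
    (hΩm : MeasurableSet Ω) (hΩ0 : volume Ω ≠ 0) {f g : EuclideanSpace ℝ (Fin d) → ℝ}
    (hf : ContinuousOn f Ω) (hg : ContinuousOn g Ω) {e : ℝ} (h : ∀ y ∈ Ω, |f y - g y| ≤ e) :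
    |√(varOn f Ω) - √(varOn g Ω)| ≤ e := by
  have := cond_isProbabilityMeasure_of_finite hΩ0 hΩc.measure_lt_top.ne
  have hf2 := hf.memLp_cond (μ := volume) hΩc hΩm 2
  have hg2 := hg.memLp_cond (μ := volume) hΩc hΩm 2
  rw [varOn_eq_variance hf2.aestronglyMeasurable.aemeasurable,
    varOn_eq_variance hg2.aestronglyMeasurable.aemeasurable]
  exact abs_sqrt_variance_sub_le hf2 hg2 ((ae_cond_mem hΩm).mono h)

lemma varOn_const_add_inner_cube (a : Fin d → ℝ) {l : ℝ} (hl : 0 < l) (c : ℝ)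
    (G : EuclideanSpace ℝ (Fin d)) :
    varOn (fun y ↦ c + ⟪G, y⟫) (cube a l) = ‖G‖ ^ 2 * l ^ 2 / 12 := by
  have := fun i ↦ isProbabilityMeasure_cond_Icc (lt_add_of_pos_right (a i) hl)
  let X : Fin d → ℝ → ℝ := fun i t ↦ G i * t
  have hX : Measurable (∑ i, fun ω : Fin d → ℝ ↦ X i (ω i)) := by fun_prop
  calc varOn (fun y ↦ c + ⟪G, y⟫) (cube a l)
      = Var[fun y ↦ c + (∑ i, fun ω : Fin d → ℝ ↦ X i (ω i)) (WithLp.ofLp y);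
          volume[|cube a l]] := by
        rw [varOn_eq_variance (by fun_prop)]
        congr with y
        simp [X, PiLp.inner_apply, mul_comm]
    _ = Var[∑ i, fun ω : Fin d → ℝ ↦ X i (ω i);
          Measure.pi fun i ↦ volume[|Icc (a i) (a i + l)]] :=
        ((measurePreserving_ofLp_cond_cube a l).variance_fun_comp
          (hX.const_add c).aemeasurable).trans (variance_const_add hX.aestronglyMeasurable c)
    _ = ‖G‖ ^ 2 * l ^ 2 / 12 := by
        rw [variance_sum_pi fun i ↦
          (continuous_const_mul (G i)).continuousOn.memLp_cond isCompact_Icc measurableSet_Icc 2,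
          EuclideanSpace.real_norm_sq_eq, Finset.sum_mul, Finset.sum_div]
        refine Finset.sum_congr rfl fun i _ ↦ (variance_const_mul (G i) id _).trans ?_
        rw [variance_id_cond_Icc (lt_add_of_pos_right _ hl)]
        ring

lemma abs_sqrt_varOn_cube_sub_le {f : EuclideanSpace ℝ (Fin d) → ℝ} {a : Fin d → ℝ} {l : ℝ}
    (hl : 0 < l) (hf : ∀ u ∈ cube a l, DifferentiableAt ℝ f u) {G : EuclideanSpace ℝ (Fin d)}
    {ε : ℝ} (hG : ∀ u ∈ cube a l, ‖gradient f u - G‖ ≤ ε) {x : EuclideanSpace ℝ (Fin d)}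
    (hx : x ∈ cube a l) :
    |√(varOn f (cube a l)) - l * (‖G‖ / √12)| ≤ ε * (√d * l) := by
  have hvol : volume (cube a l) ≠ 0 :=
    (ENNReal.toReal_pos_iff.1 (by rw [volume_cube a hl.le]; positivity)).1.ne'
  have haffine : √(varOn (fun y ↦ f x + ⟪G, y - x⟫) (cube a l)) = l * (‖G‖ / √12) := by
    have hrepr : (fun y ↦ f x + ⟪G, y - x⟫) = fun y ↦ (f x - ⟪G, x⟫) + ⟪G, y⟫ := by
      ext y
      rw [inner_sub_right]
      ring
    rw [hrepr, varOn_const_add_inner_cube a hl, Real.sqrt_div' _ (by norm_num : (0:ℝ) ≤ 12),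
      Real.sqrt_mul (by positivity), Real.sqrt_sq (norm_nonneg _), Real.sqrt_sq hl.le]
    ring
  rw [← haffine]
  refine abs_sqrt_varOn_sub_le (isCompact_cube a l) (measurableSet_cube a l) hvol
    (fun u hu ↦ (hf u hu).continuousAt.continuousWithinAt) (by fun_prop) fun y hy ↦ ?_
  calc |f y - (f x + ⟪G, y - x⟫)| = |f y - f x - ⟪G, y - x⟫| := by rw [sub_add_eq_sub_sub]
    _ ≤ ε * ‖y - x‖ :=
      abs_sub_sub_inner_le_of_norm_gradient_sub_le (convex_cube a l) hf hG hx hy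
    _ ≤ ε * (√d * l) :=
      mul_le_mul_of_nonneg_left (norm_sub_le_of_mem_cube hl.le hy hx)
        ((norm_nonneg _).trans (hG x hx))

end VarOn

/-- Step 1 of the proof of Lemma 1: for hypercubes shrinking to a point `x`,
`σ²/w^{2/d} → ‖∇f(x)‖²/12`. -/
theorem stmt16 (d : ℕ) (hd : 1 ≤ d) (f : EuclideanSpace ℝ (Fin d) → ℝ)
    (hdiff : ∀ x ∈ unitCube d, DifferentiableAt ℝ f x)
    (hgradcont : ContinuousOn (gradient f) (unitCube d))
    (x : EuclideanSpace ℝ (Fin d)) (hx : x ∈ unitCube d)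
    (Ω : ℕ → Set (EuclideanSpace ℝ (Fin d)))
    (hcube : ∀ n, IsCube (Ω n)) (hsub : ∀ n, Ω n ⊆ unitCube d)
    (hmem : ∀ n, x ∈ Ω n)
    (hdiam : Tendsto (fun n => Metric.diam (Ω n)) atTop (nhds 0)) :
    Tendsto (fun n => varOn f (Ω n) / ((volume (Ω n)).toReal) ^ ((2:ℝ)/(d:ℝ)))
      atTop (nhds (‖gradient f x‖^2/12)) := by
  choose a l hl hΩ using hcube
  obtain rfl : Ω = fun n ↦ cube (a n) (l n) := funext hΩ
  have hshrink : Tendsto (fun n ↦ cube (a n) (l n)) atTop (nhdsWithin x (unitCube d)).smallSets :=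
    tendsto_smallSets_nhdsWithin_of_diam (fun n ↦ (isCompact_cube _ _).isBounded) hsub hmem hdiam
  have hstd : Tendsto (fun n ↦ √(varOn f (cube (a n) (l n))) / l n) atTop
      (nhds (‖gradient f x‖ / √12)) := by
    refine Metric.tendsto_nhds.2 fun ε hε ↦ ?_
    have hε' : ε / (√d + 1) * √d < ε := by
      rw [div_mul_eq_mul_div, div_lt_iff₀ (by positivity)]
      nlinarith
    filter_upwards [tendsto_smallSets_iff.1 hshrink _
      (hgradcont x hx (Metric.closedBall_mem_nhds _ (by positivity : 0 < ε / (√d + 1))))]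
      with n hn
    have hG : ∀ u ∈ cube (a n) (l n), ‖gradient f u - gradient f x‖ ≤ ε / (√d + 1) :=
      fun u hu ↦ mem_closedBall_iff_norm.1 (hn hu)
    rw [Real.dist_eq, ← mul_div_cancel_left₀ (‖gradient f x‖ / √12) (hl n).ne', ← sub_div,
      abs_div, abs_of_pos (hl n), div_lt_iff₀ (hl n)]
    calc _ ≤ ε / (√d + 1) * (√d * l n) :=
          abs_sqrt_varOn_cube_sub_le (hl n) (fun u hu ↦ hdiff u (hsub n hu)) hG (hmem n)
      _ < ε * l n := by rw [← mul_assoc]; exact mul_lt_mul_of_pos_right hε' (hl n)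
  have hrescale (n : ℕ) : varOn f (cube (a n) (l n)) / (volume (cube (a n) (l n))).toReal ^
      ((2:ℝ) / d) = (√(varOn f (cube (a n) (l n))) / l n) ^ 2 := by
    rw [div_pow, Real.sq_sqrt (varOn_nonneg _ _), volume_cube _ (hl n).le, ← Real.rpow_natCast,
      ← Real.rpow_mul (hl n).le, mul_div_cancel₀ _ (Nat.cast_ne_zero.2 (by omega)), Real.rpow_two]
  simpa only [hrescale, div_pow, Real.sq_sqrt (by norm_num : (0:ℝ) ≤ 12)] using hstd.pow 2
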